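/- arXiv:1203.6299 — 2 statements merged into one kernel-verified Lean document; each statement's English description precedes it below -/
import Mathlib

section
/- Let D ⊆ ℝ≥0 be closed and discrete, U ⊆ ℝ an open interval, and f : D → ℝ with f(D) dense in U. For c ∈ U, define L(c) = {d ∈ D : f(d) < c and f(D ∩ [0,d)) ∩ (f(d), c) = ∅} and R(c) = {d ∈ D : f(d) > c and f(D ∩ [0,d)) ∩ (c, f(d)) = ∅}. Then sup f(L(c)) = c = inf f(R(c)) for every c ∈ U. -/
/-!
Finitely many points of `D` lie below any given `d`, so among the `e ≤ d` in `D` with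
`w < f e < c` one with largest value `f e` is a best left approximation of `c`. Since `f(D)`
accumulates at `c` from the left, such best approximations exist above every `w < c`, which gives
`sup f(L(c)) = c`; the statement for `R(c)` is the same one applied to `-f` and `-c`.
-/

/-- Best approximations of `c` from the left. -/
def bestL (D : Set ℝ) (f : ℝ → ℝ) (c : ℝ) : Set ℝ :=
  {d | d ∈ D ∧ f d < c ∧ ∀ e ∈ D, e < d → f e ∉ Set.Ioo (f d) c}

/-- Best approximations of `c` from the right. -/
def bestR (D : Set ℝ) (f : ℝ → ℝ) (c : ℝ) : Set ℝ :=
  {d | d ∈ D ∧ c < f d ∧ ∀ e ∈ D, e < d → f e ∉ Set.Ioo c (f d)}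

open Set

lemma isDiscrete_of_forall_le_dist {X : Type*} [PseudoMetricSpace X] {D : Set X}
    (hD : ∀ d ∈ D, ∃ ε > 0, ∀ e ∈ D, e ≠ d → ε ≤ dist e d) : IsDiscrete D := by
  refine isDiscrete_iff_forall_mem_exists_isOpen.2 fun d hd => ?_
  obtain ⟨ε, hε, hsep⟩ := hD d hd
  refine ⟨Metric.ball d ε, Metric.isOpen_ball, Subset.antisymm ?_ ?_⟩
  · rintro e ⟨he, heD⟩
    by_contra hne
    exact (Metric.mem_ball.1 he).not_ge (hsep e heD hne)
  · rintro e rfl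
    exact ⟨Metric.mem_ball_self hε, hd⟩

lemma IsClosed.finite_inter_Iic_of_isDiscrete {D : Set ℝ} (hclosed : IsClosed D)
    (hdisc : IsDiscrete D) (hbdd : BddBelow D) (d : ℝ) : (D ∩ Iic d).Finite := by
  obtain ⟨m, hm⟩ := hbdd
  exact ((isCompact_Icc.inter_left hclosed).finite (hdisc.mono inter_subset_left)).subset
    fun x hx => ⟨hx.1, hm hx.1, hx.2⟩

lemma bestR_eq_bestL_neg (D : Set ℝ) (f : ℝ → ℝ) (c : ℝ) :
    bestR D f c = bestL D (fun x => -f x) (-c) := by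
  ext d
  simp only [bestR, bestL, mem_ofPred_eq, mem_Ioo, neg_lt_neg_iff]
  exact and_congr_right fun _ => and_congr_right fun _ =>
    forall₂_congr fun _ _ => imp_congr_right fun _ => not_congr and_comm

lemma exists_mem_bestL_lt {D : Set ℝ} {f : ℝ → ℝ} {c w d : ℝ} (hfin : (D ∩ Iic d).Finite)
    (hd : d ∈ D) (hw : w < f d) (hdc : f d < c) : ∃ e ∈ bestL D f c, w < f e := by
  set S : Set ℝ := {e | e ∈ D ∧ e ≤ d ∧ f e ∈ Ioo w c}
  have hSfin : S.Finite := hfin.subset fun x hx => ⟨hx.1, hx.2.1⟩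
  obtain ⟨e, ⟨heD, hed, hwe, hec⟩, hmax⟩ :=
    hSfin.exists_maximalFor f S ⟨d, hd, le_rfl, hw, hdc⟩
  refine ⟨e, ⟨heD, hec, fun e' he'D he'e he' => ?_⟩, hwe⟩
  have he'S : e' ∈ S := ⟨he'D, he'e.le.trans hed, hwe.trans he'.1, he'.2⟩
  exact (hmax he'S he'.1.le).not_gt he'.1

lemma sSup_image_bestL {D : Set ℝ} (f : ℝ → ℝ) {c : ℝ} (hfin : ∀ d, (D ∩ Iic d).Finite)
    (happrox : ∀ w < c, ∃ d ∈ D, w < f d ∧ f d < c) :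
    sSup (f '' bestL D f c) = c := by
  have hbest : ∀ w < c, ∃ e ∈ bestL D f c, w < f e := fun w hw => by
    obtain ⟨d, hd, hwd, hdc⟩ := happrox w hw
    exact exists_mem_bestL_lt (hfin d) hd hwd hdc
  obtain ⟨e₀, he₀, -⟩ := hbest (c - 1) (by linarith)
  refine csSup_eq_of_forall_le_of_forall_lt_exists_gt ⟨f e₀, e₀, he₀, rfl⟩ ?_ fun w hw => ?_
  · rintro _ ⟨e, he, rfl⟩
    exact he.2.1.le
  · obtain ⟨e, he, hwe⟩ := hbest w hw
    exact ⟨f e, ⟨e, he, rfl⟩, hwe⟩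

lemma sInf_image_bestR {D : Set ℝ} (f : ℝ → ℝ) {c : ℝ} (hfin : ∀ d, (D ∩ Iic d).Finite)
    (happrox : ∀ w, c < w → ∃ d ∈ D, c < f d ∧ f d < w) :
    sInf (f '' bestR D f c) = c := by
  have hneg := sSup_image_bestL (fun x => -f x) (c := -c) hfin fun w hw => by
    obtain ⟨d, hd, hcd, hdw⟩ := happrox (-w) (by linarith)
    exact ⟨d, hd, by linarith, by linarith⟩
  rw [← bestR_eq_bestL_neg, ← image_image (fun x => -x) f, image_neg_eq_neg] at hneg
  rw [Real.sInf_def, hneg, neg_neg]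

lemma exists_mem_Ioo_of_Ioo_subset_closure {S : Set ℝ} {a b x y : ℝ}
    (h : Ioo a b ⊆ closure S) (hax : a ≤ x) (hxy : x < y) (hyb : y ≤ b) :
    ∃ s ∈ S, s ∈ Ioo x y := by
  have hmid : (closure S ∩ Ioo x y).Nonempty :=
    ⟨(x + y) / 2, h ⟨by linarith, by linarith⟩, by linarith, by linarith⟩
  exact (closure_inter_open_nonempty_iff isOpen_Ioo).1 hmid

theorem stmt0_general (D U : Set ℝ) (f : ℝ → ℝ)
    (hD0 : D ⊆ Set.Ici 0) (hDclosed : IsClosed D)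
    (hDdisc : ∀ d ∈ D, ∃ ε > 0, ∀ e ∈ D, e ≠ d → ε ≤ |e - d|)
    (a b : ℝ) (hU : U = Set.Ioo a b)
    (hdense : U ⊆ closure (f '' D))
    (c : ℝ) (hc : c ∈ U) :
    sSup (f '' bestL D f c) = c ∧ sInf (f '' bestR D f c) = c := by
  subst hU
  have hfin : ∀ d, (D ∩ Iic d).Finite := hDclosed.finite_inter_Iic_of_isDiscrete
    (isDiscrete_of_forall_le_dist (by simpa only [Real.dist_eq] using hDdisc)) ⟨0, hD0⟩
  refine ⟨sSup_image_bestL f hfin fun w hw => ?_, sInf_image_bestR f hfin fun w hw => ?_⟩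
  · obtain ⟨_, ⟨d, hd, rfl⟩, hwd, hdc⟩ :=
      exists_mem_Ioo_of_Ioo_subset_closure hdense (le_max_right w a) (max_lt hw hc.1) hc.2.le
    exact ⟨d, hd, (le_max_left w a).trans_lt hwd, hdc⟩
  · obtain ⟨_, ⟨d, hd, rfl⟩, hcd, hdw⟩ :=
      exists_mem_Ioo_of_Ioo_subset_closure hdense hc.1.le (lt_min hw hc.2) (min_le_right w b)
    exact ⟨d, hd, hcd, hdw.trans_le (min_le_left w b)⟩

theorem stmt0 (D U : Set ℝ) (f : ℝ → ℝ)
    (hD0 : D ⊆ Set.Ici 0) (hDclosed : IsClosed D)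
    (hDdisc : ∀ d ∈ D, ∃ ε > 0, ∀ e ∈ D, e ≠ d → ε ≤ |e - d|)
    (a b : ℝ) (hab : a < b) (hU : U = Set.Ioo a b)
    (hdense : U ⊆ closure (f '' D))
    (c : ℝ) (hc : c ∈ U) :
    sSup (f '' bestL D f c) = c ∧ sInf (f '' bestR D f c) = c :=
  stmt0_general D U f hD0 hDclosed hDdisc a b hU hdense c hc
end

section
/- Let D ⊆ ℝ≥0 be closed and discrete, U an open interval, and f : D → ℝ with f(D) dense in U. Let d₁ ≤ d₂ in D and let (L, R) be a finite approximation up to d₁ with L, R nonempty. Then there exists a unique finite approximation (L', R') up to d₂ extending (L, R) such that L = L'. -/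
/-!
Let `M = max f(L)`. In an approximation `(L, R')` up to `d`, all of `R'` lies above `M`, and
condition (3) can be met through `L` only at points where `f ≤ M`. So (3) forces `R'` to be the
set `recordMinima D f M d` of points of `D ∩ [0, d]` at which `f`, among the points of `D` with
value above `M`, attains a strict record low read from left to right.
This gives uniqueness, and, since the record condition does not depend on `d`, also `R ⊆ R'`.
For existence, closed discreteness makes `D ∩ [0, d₂]` finite, and a point `e` with `f e > M` is
then covered by the leftmost point `r ≤ e` of `D` with `M < f r ≤ f e`, which is a record.
-/

/-- `(L, R)` is a finite approximation up to `d`. -/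
def FinApprox (D : Set ℝ) (f : ℝ → ℝ) (d : ℝ) (L R : Finset ℝ) : Prop :=
  (↑L : Set ℝ) ⊆ D ∩ Set.Icc 0 d ∧ (↑R : Set ℝ) ⊆ D ∩ Set.Icc 0 d ∧
  (∀ l ∈ L, ∀ r ∈ R, f l < f r) ∧
  StrictMonoOn f (↑L : Set ℝ) ∧ StrictAntiOn f (↑R : Set ℝ) ∧
  (∀ e ∈ D, e ≤ d → (∃ l ∈ L, l ≤ e ∧ f e ≤ f l) ∨ (∃ r ∈ R, r ≤ e ∧ f r ≤ f e))

open Set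

lemma IsClosed.finite_inter_of_isCompact {X : Type*} [PseudoMetricSpace X] {D K : Set X}
    (hD : IsClosed D) (hisol : ∀ x ∈ D, ∃ ε > 0, ∀ e ∈ D, e ≠ x → ε ≤ dist e x)
    (hK : IsCompact K) : (D ∩ K).Finite := by
  have hdisc : IsDiscrete D := isDiscrete_iff_forall_mem_exists_isOpen.mpr fun x hx => by
    obtain ⟨ε, hε, hsep⟩ := hisol x hx
    refine ⟨Metric.ball x ε, Metric.isOpen_ball, subset_antisymm ?_ ?_⟩
    · rintro y ⟨hy, hyD⟩
      by_contra hne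
      exact (hsep y hyD hne).not_gt (Metric.mem_ball.mp hy)
    · rintro y rfl
      exact ⟨Metric.mem_ball_self hε, hx⟩
  exact (hK.inter_left hD).finite (hdisc.mono inter_subset_left)

def recordMinima (D : Set ℝ) (f : ℝ → ℝ) (M d : ℝ) : Set ℝ :=
  {e ∈ D ∩ Icc 0 d | M < f e ∧ ∀ e' ∈ D, e' < e → M < f e' → f e < f e'}

section recordMinima

variable {D : Set ℝ} {f : ℝ → ℝ} {M : ℝ}

lemma recordMinima_mono {d₁ d₂ : ℝ} (hd : d₁ ≤ d₂) :
    recordMinima D f M d₁ ⊆ recordMinima D f M d₂ :=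
  fun _ ⟨⟨heD, he0, hed⟩, hrec⟩ => ⟨⟨heD, he0, hed.trans hd⟩, hrec⟩

lemma strictAntiOn_recordMinima {d : ℝ} : StrictAntiOn f (recordMinima D f M d) :=
  fun _ ⟨⟨hD, _⟩, hM, _⟩ _ ⟨_, _, hrec⟩ hlt => hrec _ hD hlt hM

lemma exists_mem_recordMinima_le {d e : ℝ} (hD0 : D ⊆ Ici 0) (hfin : (D ∩ Icc 0 d).Finite)
    (he : e ∈ D) (hed : e ≤ d) (hMe : M < f e) :
    ∃ r ∈ recordMinima D f M d, r ≤ e ∧ f r ≤ f e := by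
  set S := {x ∈ D ∩ Icc 0 d | x ≤ e ∧ M < f x ∧ f x ≤ f e}
  obtain ⟨r, ⟨hr, hre, hMr, hfr⟩, hleft⟩ := S.exists_min_image id (hfin.subset fun _ hx => hx.1)
    ⟨e, ⟨he, hD0 he, hed⟩, le_rfl, hMe, le_rfl⟩
  refine ⟨r, ⟨hr, hMr, fun e' he' hlt hMe' => ?_⟩, hre, hfr⟩
  by_contra! hle
  have he'S : e' ∈ S :=
    ⟨⟨he', hD0 he', hlt.le.trans hr.2.2⟩, (hlt.trans_le hre).le, hMe', hle.trans hfr⟩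
  exact (hleft e' he'S).not_gt hlt

end recordMinima

namespace FinApprox

variable {D : Set ℝ} {f : ℝ → ℝ} {L R : Finset ℝ} {l₀ : ℝ}

lemma coe_right_eq_recordMinima {d : ℝ} (h : FinApprox D f d L R) (hl₀ : l₀ ∈ L)
    (hmax : ∀ l ∈ L, f l ≤ f l₀) : (R : Set ℝ) = recordMinima D f (f l₀) d := by
  obtain ⟨-, hR, hLR, -, hanti, hcov⟩ := h
  ext r
  constructor
  · intro hr
    refine ⟨hR hr, hLR l₀ hl₀ r hr, fun e' he' hlt hMe' => ?_⟩
    obtain ⟨l, hl, -, hle⟩ | ⟨r', hr', hr'e', hle⟩ := hcov e' he' (hlt.le.trans (hR hr).2.2)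
    · exact absurd (hle.trans (hmax l hl)) hMe'.not_ge
    · exact (hanti hr' hr (hr'e'.trans_lt hlt)).trans_le hle
  · rintro ⟨⟨hrD, -, hrd⟩, hMr, hrec⟩
    obtain ⟨l, hl, -, hle⟩ | ⟨r', hr', hr'r, hle⟩ := hcov r hrD hrd
    · exact absurd (hle.trans (hmax l hl)) hMr.not_ge
    · obtain rfl | hlt := hr'r.eq_or_lt
      · exact hr'
      · exact absurd hle (hrec r' (hR hr').1 hlt (hLR l₀ hl₀ r' hr')).not_ge

lemma coe_right_subset_recordMinima {d₁ d₂ : ℝ} (h : FinApprox D f d₁ L R) (hd : d₁ ≤ d₂)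
    (hl₀ : l₀ ∈ L) (hmax : ∀ l ∈ L, f l ≤ f l₀) :
    (R : Set ℝ) ⊆ recordMinima D f (f l₀) d₂ :=
  h.coe_right_eq_recordMinima hl₀ hmax ▸ recordMinima_mono hd

lemma extend {d₁ d₂ : ℝ} {R' : Finset ℝ} (h : FinApprox D f d₁ L R) (hd : d₁ ≤ d₂)
    (hD0 : D ⊆ Ici 0) (hfin : (D ∩ Icc 0 d₂).Finite) (hl₀ : l₀ ∈ L)
    (hmax : ∀ l ∈ L, f l ≤ f l₀) (hR' : (R' : Set ℝ) = recordMinima D f (f l₀) d₂) :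
    FinApprox D f d₂ L R' := by
  have hRR' : (R : Set ℝ) ⊆ R' := hR' ▸ h.coe_right_subset_recordMinima hd hl₀ hmax
  obtain ⟨hL, -, -, hmono, -, hcov⟩ := h
  refine ⟨fun l hl => ⟨(hL hl).1, (hL hl).2.1, (hL hl).2.2.trans hd⟩, hR' ▸ fun r hr => hr.1,
    fun l hl r hr => (hmax l hl).trans_lt
      (show r ∈ recordMinima D f (f l₀) d₂ from hR' ▸ Finset.mem_coe.mpr hr).2.1, hmono,
    hR' ▸ strictAntiOn_recordMinima, fun e he hed => ?_⟩
  rcases lt_or_ge (f l₀) (f e) with hMe | heM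
  · obtain ⟨r, hr, hre, hfr⟩ := exists_mem_recordMinima_le hD0 hfin he hed hMe
    exact Or.inr ⟨r, Finset.mem_coe.mp (hR' ▸ hr), hre, hfr⟩
  rcases le_or_gt l₀ e with hle | hlt
  · exact Or.inl ⟨l₀, hl₀, hle, heM⟩
  obtain hcovL | ⟨r, hr, hre, hfr⟩ := hcov e he (hlt.le.trans (hL hl₀).2.2)
  · exact Or.inl hcovL
  · exact Or.inr ⟨r, hRR' hr, hre, hfr⟩

end FinApprox

theorem stmt3_general (D : Set ℝ) (f : ℝ → ℝ)
    (hD0 : D ⊆ Set.Ici 0) (hDclosed : IsClosed D)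
    (hDdisc : ∀ d ∈ D, ∃ ε > 0, ∀ e ∈ D, e ≠ d → ε ≤ |e - d|)
    (d₁ d₂ : ℝ) (hd : d₁ ≤ d₂)
    (L R : Finset ℝ) (hL : L.Nonempty)
    (happ : FinApprox D f d₁ L R) :
    ∃! p : Finset ℝ × Finset ℝ,
      FinApprox D f d₂ p.1 p.2 ∧ L ⊆ p.1 ∧ R ⊆ p.2 ∧ p.1 = L := by
  obtain ⟨l₀, hl₀, hmax⟩ := L.exists_max_image f hL
  have hfin : (D ∩ Icc 0 d₂).Finite :=
    hDclosed.finite_inter_of_isCompact (by simpa only [Real.dist_eq] using hDdisc) isCompact_Icc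
  obtain ⟨R', hR'⟩ := (hfin.subset fun _ hx => hx.1 :
    (recordMinima D f (f l₀) d₂).Finite).exists_finset_coe
  refine ⟨(L, R'), ⟨happ.extend hd hD0 hfin hl₀ hmax hR', subset_rfl,
    Finset.coe_subset.mp (hR' ▸ happ.coe_right_subset_recordMinima hd hl₀ hmax), rfl⟩, ?_⟩
  rintro ⟨L₂, R₂⟩ ⟨happ₂, -, -, rfl : L₂ = L⟩
  exact Prod.ext rfl
    (Finset.coe_injective ((happ₂.coe_right_eq_recordMinima hl₀ hmax).trans hR'.symm))

theorem stmt3 (D U : Set ℝ) (f : ℝ → ℝ)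
    (hD0 : D ⊆ Set.Ici 0) (hDclosed : IsClosed D)
    (hDdisc : ∀ d ∈ D, ∃ ε > 0, ∀ e ∈ D, e ≠ d → ε ≤ |e - d|)
    (a b : ℝ) (hab : a < b) (hU : U = Set.Ioo a b)
    (hdense : U ⊆ closure (f '' D))
    (d₁ d₂ : ℝ) (hd₁ : d₁ ∈ D) (hd₂ : d₂ ∈ D) (hd : d₁ ≤ d₂)
    (L R : Finset ℝ) (hL : L.Nonempty) (hR : R.Nonempty)
    (happ : FinApprox D f d₁ L R) :
    ∃! p : Finset ℝ × Finset ℝ,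
      FinApprox D f d₂ p.1 p.2 ∧ L ⊆ p.1 ∧ R ⊆ p.2 ∧ p.1 = L :=
  stmt3_general D f hD0 hDclosed hDdisc d₁ d₂ hd L R hL happ
end
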